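/- arXiv:2212.06734 — 4 statements merged into one kernel-verified Lean document; each statement's English description precedes it below -/
import Mathlib

section
/- Let S be defined by the full-history recurrence S_n = Σ_{i=1}^{n} a_i S_{n-i} with fixed non-negative integers a_i (the coefficients depending only on the distance), with S_0 = 1 and S_k = 0 for k < 0. Then for all n, k ≥ 1: S_{n+k} = S_n S_k + Σ_{i≥2} a_i Σ_{j=1}^{i-1} S_{n-j} S_{k-i+j}. -/
open Finset
section
variable (a : ℕ → ℕ) (S : ℤ → ℕ)
variable (h0 : S 0 = 1) (hneg : ∀ n : ℤ, n < 0 → S n = 0)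
variable (hrec : ∀ n : ℤ, 1 ≤ n → S n = ∑ i ∈ Finset.Icc 1 n.toNat, a i * S (n - i))

include hneg hrec in
lemma recM : ∀ t : ℤ, 1 ≤ t → ∀ M : ℕ, t ≤ M → S t = ∑ i ∈ Finset.Icc 1 M, a i * S (t - i) := by
  intro t ht M hM
  rw [hrec t ht]
  apply Finset.sum_subset
  · apply Finset.Icc_subset_Icc_right; omega
  · intro i hi hni
    simp only [Finset.mem_Icc] at hi hni
    rw [hneg (t - i) (by omega), mul_zero]

include h0 hneg hrec in
lemma recM0 : ∀ t : ℤ, ∀ M : ℕ, t ≤ M →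
    S t = (if t = 0 then 1 else 0) + ∑ i ∈ Finset.Icc 1 M, a i * S (t - i) := by
  intro t M hM
  rcases lt_trichotomy t 0 with h | h | h
  · rw [hneg t h, if_neg (by omega)]
    symm
    simp only [zero_add]
    apply Finset.sum_eq_zero
    intro i hi
    simp only [Finset.mem_Icc] at hi
    rw [hneg (t - i) (by omega), mul_zero]
  · subst h; rw [if_pos rfl, h0]
    have : ∑ i ∈ Finset.Icc 1 M, a i * S ((0:ℤ) - i) = 0 := by
      apply Finset.sum_eq_zero
      intro i hi
      simp only [Finset.mem_Icc] at hi
      rw [hneg _ (by omega), mul_zero]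
    omega
  · rw [if_neg (by omega), zero_add]
    exact recM a S hneg hrec t (by omega) M hM

include hneg in
lemma innerZero : ∀ n k : ℤ, 0 ≤ n → ∀ i : ℕ, n + k < i →
    ∑ j ∈ Finset.Icc 1 (i - 1), S (n - j) * S (k - i + j) = 0 := by
  intro n k hn i hi
  apply Finset.sum_eq_zero
  intro j hj
  simp only [Finset.mem_Icc] at hj
  rcases lt_or_ge n (j : ℤ) with h | h
  · rw [hneg (n - j) (by omega), zero_mul]
  · rw [hneg (k - i + j) (by omega), mul_zero]

include hneg in
lemma outerExt : ∀ n k : ℤ, 0 ≤ n → ∀ M : ℕ, (n + k).toNat ≤ M →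
    ∑ i ∈ Finset.Icc 2 M, a i * ∑ j ∈ Finset.Icc 1 (i - 1), S (n - j) * S (k - i + j)
    = ∑ i ∈ Finset.Icc 2 (n + k).toNat, a i * ∑ j ∈ Finset.Icc 1 (i - 1), S (n - j) * S (k - i + j) := by
  intro n k hn M hM
  symm
  apply Finset.sum_subset
  · apply Finset.Icc_subset_Icc_right; omega
  · intro i hi hni
    simp only [Finset.mem_Icc] at hi hni
    have hik : n + k < i := by
      rcases le_or_gt 0 (n + k) with h | h
      · have := Int.toNat_of_nonneg h; omega
      · omega
    rw [innerZero S hneg n k hn i hik, mul_zero]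

include h0 hneg hrec in
lemma auxMain : ∀ K : ℕ, ∀ n : ℤ, 1 ≤ n →
    S (n + K) = S n * S K +
      ∑ i ∈ Finset.Icc 2 (n + (K:ℤ)).toNat,
        a i * ∑ j ∈ Finset.Icc 1 (i - 1), S (n - j) * S ((K:ℤ) - i + j) := by
  intro K
  induction K using Nat.strong_induction_on with
  | _ K IH =>
  intro n hn
  rcases Nat.eq_zero_or_pos K with hK0 | hK1
  · subst hK0
    simp only [Nat.cast_zero, add_zero]
    rw [h0, mul_one]
    have hz : ∑ i ∈ Finset.Icc 2 n.toNat,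
        a i * ∑ j ∈ Finset.Icc 1 (i - 1), S (n - j) * S ((0:ℤ) - i + j) = 0 := by
      apply Finset.sum_eq_zero
      intro i hi
      simp only [Finset.mem_Icc] at hi
      have : ∑ j ∈ Finset.Icc 1 (i - 1), S (n - j) * S ((0:ℤ) - i + j) = 0 := by
        apply Finset.sum_eq_zero
        intro j hj
        simp only [Finset.mem_Icc] at hj
        rw [hneg ((0:ℤ) - i + j) (by omega), mul_zero]
      rw [this, mul_zero]
    omega
  · -- K ≥ 1
    set M := (n + (K:ℤ)).toNat with hMdef
    have hM : (M:ℤ) = n + K := Int.toNat_of_nonneg (by omega)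
    have hKM : K ≤ M := by omega
    -- Step 1: expand S (n + K)
    have h1 : S (n + (K:ℤ)) = ∑ i ∈ Finset.Icc 1 M, a i * S (n + (K:ℤ) - i) :=
      recM a S hneg hrec (n + K) (by omega) M (by omega)
    -- split the sum
    have hIoc : ∀ X : ℕ, Finset.Icc 1 X = Finset.Ioc 0 X := fun X => Finset.Icc_add_one_left_eq_Ioc 0 X
    have hsplit : ∑ i ∈ Finset.Icc 1 M, a i * S (n + (K:ℤ) - i)
        = (∑ i ∈ Finset.Icc 1 K, a i * S (n + (K:ℤ) - i))
          + ∑ i ∈ Finset.Icc (K+1) M, a i * S (n + (K:ℤ) - i) := by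
      rw [hIoc, hIoc, Finset.Icc_add_one_left_eq_Ioc]
      exact (Finset.sum_Ioc_consecutive _ (Nat.zero_le K) hKM).symm
    -- A part: apply IH pointwise
    have hA : ∑ i ∈ Finset.Icc 1 K, a i * S (n + (K:ℤ) - i)
        = S n * S K + ∑ i ∈ Finset.Icc 1 K, a i *
            ∑ m ∈ Finset.Icc 2 M, a m *
              ∑ j ∈ Finset.Icc 1 (m - 1), S (n - j) * S ((K:ℤ) - i - m + j) := by
      have hpt : ∀ i ∈ Finset.Icc 1 K, a i * S (n + (K:ℤ) - i)
          = a i * (S n * S ((K:ℤ) - i)) + a i *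
              ∑ m ∈ Finset.Icc 2 M, a m *
                ∑ j ∈ Finset.Icc 1 (m - 1), S (n - j) * S ((K:ℤ) - i - m + j) := by
        intro i hi
        simp only [Finset.mem_Icc] at hi
        have hlt : K - i < K := by omega
        have hIH := IH (K - i) hlt n hn
        have hcast : ((K - i : ℕ) : ℤ) = (K:ℤ) - i := by omega
        rw [hcast] at hIH
        have hext := outerExt a S hneg n ((K:ℤ) - i) (by omega) M (by omega)
        rw [show n + (K:ℤ) - i = n + ((K:ℤ) - i) by ring, hIH, ← hext, mul_add]
      rw [Finset.sum_congr rfl hpt, Finset.sum_add_distrib]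
      congr 1
      have : ∑ i ∈ Finset.Icc 1 K, a i * (S n * S ((K:ℤ) - i))
          = S n * ∑ i ∈ Finset.Icc 1 K, a i * S ((K:ℤ) - i) := by
        rw [Finset.mul_sum]
        apply Finset.sum_congr rfl
        intro i _
        ring
      rw [this, ← recM a S hneg hrec (K:ℤ) (by omega) K (by omega)]
    -- C extension: extend i-range from Icc 1 K to Icc 1 M
    have hC : ∑ i ∈ Finset.Icc 1 K, a i *
            ∑ m ∈ Finset.Icc 2 M, a m *
              ∑ j ∈ Finset.Icc 1 (m - 1), S (n - j) * S ((K:ℤ) - i - m + j)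
        = ∑ i ∈ Finset.Icc 1 M, a i *
            ∑ m ∈ Finset.Icc 2 M, a m *
              ∑ j ∈ Finset.Icc 1 (m - 1), S (n - j) * S ((K:ℤ) - i - m + j) := by
      apply Finset.sum_subset
      · apply Finset.Icc_subset_Icc_right; omega
      · intro i hi hni
        simp only [Finset.mem_Icc] at hi hni
        have : ∑ m ∈ Finset.Icc 2 M, a m *
              ∑ j ∈ Finset.Icc 1 (m - 1), S (n - j) * S ((K:ℤ) - i - m + j) = 0 := by
          apply Finset.sum_eq_zero
          intro m hm
          simp only [Finset.mem_Icc] at hm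
          have : ∑ j ∈ Finset.Icc 1 (m - 1), S (n - j) * S ((K:ℤ) - i - m + j) = 0 := by
            apply Finset.sum_eq_zero
            intro j hj
            simp only [Finset.mem_Icc] at hj
            rw [hneg ((K:ℤ) - i - m + j) (by omega), mul_zero]
          rw [this, mul_zero]
        rw [this, mul_zero]
    -- RHS expansion via recM0
    have hRHS : ∑ m ∈ Finset.Icc 2 M, a m *
          ∑ j ∈ Finset.Icc 1 (m - 1), S (n - j) * S ((K:ℤ) - m + j)
        = (∑ i ∈ Finset.Icc (K+1) M, a i * S (n + (K:ℤ) - i))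
          + ∑ m ∈ Finset.Icc 2 M, a m *
              ∑ j ∈ Finset.Icc 1 (m - 1), S (n - j) *
                ∑ i ∈ Finset.Icc 1 M, a i * S ((K:ℤ) - m + j - i) := by
      have hpt : ∀ m ∈ Finset.Icc 2 M, a m *
            ∑ j ∈ Finset.Icc 1 (m - 1), S (n - j) * S ((K:ℤ) - m + j)
          = a m * ∑ j ∈ Finset.Icc 1 (m - 1), S (n - j) * (if ((K:ℤ) - m + j = 0) then 1 else 0)
            + a m * ∑ j ∈ Finset.Icc 1 (m - 1), S (n - j) *
                ∑ i ∈ Finset.Icc 1 M, a i * S ((K:ℤ) - m + j - i) := by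
        intro m hm
        simp only [Finset.mem_Icc] at hm
        rw [← mul_add, ← Finset.sum_add_distrib]
        congr 1
        apply Finset.sum_congr rfl
        intro j hj
        simp only [Finset.mem_Icc] at hj
        rw [← mul_add]
        congr 1
        exact recM0 a S h0 hneg hrec ((K:ℤ) - m + j) M (by omega)
      rw [Finset.sum_congr rfl hpt, Finset.sum_add_distrib]
      congr 1
      -- the delta part equals the B sum
      have hDinner : ∀ m ∈ Finset.Icc 2 M,
          a m * ∑ j ∈ Finset.Icc 1 (m - 1), S (n - j) * (if ((K:ℤ) - m + j = 0) then 1 else 0)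
          = if K + 1 ≤ m then a m * S (n + (K:ℤ) - m) else 0 := by
        intro m hm
        simp only [Finset.mem_Icc] at hm
        by_cases h : K + 1 ≤ m
        · rw [if_pos h]
          congr 1
          rw [Finset.sum_eq_single (m - K)]
          · rw [if_pos (by omega), mul_one]
            congr 1
            omega
          · intro j hj hne
            simp only [Finset.mem_Icc] at hj
            rw [if_neg (by omega), mul_zero]
          · intro h'
            exact absurd (Finset.mem_Icc.mpr ⟨by omega, by omega⟩) h'
        · rw [if_neg h]
          have : ∑ j ∈ Finset.Icc 1 (m - 1), S (n - j) * (if ((K:ℤ) - m + j = 0) then 1 else 0) = 0 := by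
            apply Finset.sum_eq_zero
            intro j hj
            simp only [Finset.mem_Icc] at hj
            rw [if_neg (by omega), mul_zero]
          rw [this, mul_zero]
      rw [Finset.sum_congr rfl hDinner, Finset.sum_ite, Finset.sum_const_zero, add_zero]
      apply Finset.sum_congr
      · ext x
        simp only [Finset.mem_filter, Finset.mem_Icc]
        omega
      · intro x _; rfl
    -- E = C reshuffle
    have hE : ∑ m ∈ Finset.Icc 2 M, a m *
          ∑ j ∈ Finset.Icc 1 (m - 1), S (n - j) *
            ∑ i ∈ Finset.Icc 1 M, a i * S ((K:ℤ) - m + j - i)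
        = ∑ i ∈ Finset.Icc 1 M, a i *
            ∑ m ∈ Finset.Icc 2 M, a m *
              ∑ j ∈ Finset.Icc 1 (m - 1), S (n - j) * S ((K:ℤ) - i - m + j) := by
      simp only [Finset.mul_sum]
      rw [Finset.sum_comm]
      apply Finset.sum_congr rfl
      intro m _
      rw [Finset.sum_comm]
      apply Finset.sum_congr rfl
      intro i _
      apply Finset.sum_congr rfl
      intro j _
      rw [show (K:ℤ) - m + j - i = (K:ℤ) - i - m + j by ring]
      ring
    -- put it all together
    rw [h1, hsplit, hA, hC, ← hE, hRHS]
    ring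

end

theorem master_identity (a : ℕ → ℕ) (S : ℤ → ℕ)
    (h0 : S 0 = 1) (hneg : ∀ n : ℤ, n < 0 → S n = 0)
    (hrec : ∀ n : ℤ, 1 ≤ n → S n = ∑ i ∈ Finset.Icc 1 n.toNat, a i * S (n - i)) :
    ∀ n k : ℤ, 1 ≤ n → 1 ≤ k →
      S (n + k) = S n * S k +
        ∑ i ∈ Finset.Icc 2 (n + k).toNat,
          a i * ∑ j ∈ Finset.Icc 1 (i - 1), S (n - j) * S (k - i + j) := by
  intro n k hn hk
  have hk' : ((k.toNat : ℤ)) = k := Int.toNat_of_nonneg (by omega)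
  have := auxMain a S h0 hneg hrec k.toNat n hn
  rw [hk'] at this
  exact this
end

section
/- For all n ≥ 2 and k ≥ 2, the Narayana's cows sequence satisfies N_{n+k} = N_n N_k + N_{n-1} N_{k-2} + N_{n-2} N_{k-1}. -/
def narayana : ℕ → ℕ
  | 0 => 1
  | 1 => 1
  | 2 => 1
  | (n + 3) => narayana (n + 2) + narayana n

lemma narayana_aux (k : ℕ) : ∀ n, narayana (n + 2 + (k + 2)) =
    narayana (n + 2) * narayana (k + 2) + narayana (n + 1) * narayana k +
      narayana n * narayana (k + 1) := by
  induction k using Nat.strong_induction_on with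
  | _ k ih =>
    match k with
    | 0 =>
      intro n
      show narayana (n + 1 + 3) = _
      simp [narayana]
      ring
    | 1 =>
      intro n
      show narayana (n + 2 + 3) = _
      simp [narayana, show n + 2 + 2 = n + 1 + 3 from by ring]
      ring
    | 2 =>
      intro n
      show narayana (n + 3 + 3) = _
      simp [narayana, show n + 3 + 2 = n + 2 + 3 from by ring,
        show n + 2 + 2 = n + 1 + 3 from by ring]
      ring
    | (k + 3) =>
      intro n
      have h1 := ih (k + 2) (by omega) n
      have h2 := ih k (by omega) n
      have e : n + 2 + (k + 3 + 2) = (n + 2 + k + 2) + 3 := by ring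
      rw [e, narayana]
      have e1 : n + 2 + k + 2 + 2 = n + 2 + (k + 2 + 2) := by ring
      have e2 : n + 2 + k + 2 = n + 2 + (k + 2) := by ring
      rw [e1, e2, h1, h2]
      have r1 : narayana (k + 3 + 2) = narayana (k + 2 + 2) + narayana (k + 2) := by
        rw [show k + 3 + 2 = (k + 2) + 3 from by ring, narayana]
      have r2 : narayana (k + 3 + 1) = narayana (k + 3) + narayana (k + 1) := by
        rw [show k + 3 + 1 = (k + 1) + 3 from by ring, narayana]
      have r3 : narayana (k + 3) = narayana (k + 2) + narayana k := by
        rw [narayana]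
      rw [r1, r2, r3]
      ring

theorem narayana_add (n k : ℕ) (hn : 2 ≤ n) (hk : 2 ≤ k) :
    narayana (n + k) =
      narayana n * narayana k + narayana (n - 1) * narayana (k - 2) +
        narayana (n - 2) * narayana (k - 1) := by
  obtain ⟨n', rfl⟩ : ∃ m, n = m + 2 := ⟨n - 2, by omega⟩
  obtain ⟨k', rfl⟩ : ∃ m, k = m + 2 := ⟨k - 2, by omega⟩
  simpa using narayana_aux k' n'
end

section
/- For all n ≥ 2, the Narayana's cows sequence satisfies N_{2n} = N_n^2 + 2 N_{n-1} N_{n-2} and N_{2n+1} = N_{n-1}^2 + N_n (N_{n-2} + N_{n+1}). -/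
lemma narayana_add_s12 : ∀ b a : ℕ, narayana (a + b + 4) =
    narayana (a + 2) * narayana (b + 2) + narayana (a + 1) * narayana b +
      narayana a * narayana (b + 1)
  | 0, a => by
    show narayana (a + 4) = _
    rw [show a + 4 = a + 1 + 3 by ring]
    simp only [narayana, show a + 1 + 2 = a + 0 + 3 by ring, show a + 0 = a from rfl]
    try simp only [narayana]
    ring
  | 1, a => by
    show narayana (a + 5) = _
    rw [show a + 5 = a + 2 + 3 by ring]
    simp only [narayana, show a + 2 + 2 = a + 1 + 3 by ring]
    try simp only [narayana]
    ring
  | 2, a => by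
    show narayana (a + 6) = _
    rw [show a + 6 = a + 3 + 3 by ring]
    simp only [narayana, show a + 3 + 2 = a + 2 + 3 by ring, show a + 3 = a + 0 + 3 by ring]
    try simp only [narayana, show a + 2 + 2 = a + 1 + 3 by ring, show a + 0 + 2 = a + 2 by ring,
      show a + 0 = a from rfl]
    try simp only [narayana]
    ring
  | (b + 3), a => by
    have h1 := narayana_add_s12 b a
    have h2 := narayana_add_s12 (b + 2) a
    rw [show a + (b + 3) + 4 = (a + b + 4) + 3 by ring, narayana,
      show a + b + 4 + 2 = a + (b + 2) + 4 by ring, h2, h1]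
    simp only [show b + 3 + 2 = b + 2 + 3 by ring, show b + 3 + 1 = b + 1 + 3 by ring,
      show b + 2 + 2 = b + 1 + 3 by ring, show b + 2 + 1 = b + 0 + 3 by ring,
      show b + 3 = b + 0 + 3 by ring, narayana, show b + 0 = b from rfl]
    ring

theorem narayana_double (n : ℕ) (hn : 2 ≤ n) :
    narayana (2 * n) = narayana n ^ 2 + 2 * narayana (n - 1) * narayana (n - 2) ∧
    narayana (2 * n + 1) =
      narayana (n - 1) ^ 2 + narayana n * (narayana (n - 2) + narayana (n + 1)) := by
  obtain ⟨a, rfl⟩ := Nat.exists_eq_add_of_le hn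
  have h1 := narayana_add_s12 a a
  have h2 := narayana_add_s12 a (a + 1)
  rw [show 2 + a - 1 = a + 1 by omega, show 2 + a - 2 = a by omega,
    show 2 + a = a + 2 by ring]
  constructor
  · rw [show 2 * (a + 2) = a + a + 4 by ring, h1]
    ring
  · rw [show 2 * (a + 2) + 1 = (a + 1) + a + 4 by ring, h2,
      show a + 2 + 1 = a + 1 + 2 by ring]
    ring
end

section
/- For all n ≥ 1 and k ≥ 1, the tetranacci numbers satisfy Q_{n+k} = Q_{n+2} Q_{k+1} + Q_{n+1}(Q_{k+2} - Q_{k+1}) + Q_n(Q_{k-1} + Q_k) + Q_{n-1} Q_k. -/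
def tetranacci : ℕ → ℕ
  | 0 => 0
  | 1 => 0
  | 2 => 0
  | 3 => 1
  | (n + 4) => tetranacci (n + 3) + tetranacci (n + 2) + tetranacci (n + 1) + tetranacci n

lemma trec (n : ℕ) : (tetranacci (n + 4) : ℤ) =
    tetranacci (n + 3) + tetranacci (n + 2) + tetranacci (n + 1) + tetranacci n := by
  simp [tetranacci]

lemma taux (m j : ℕ) : (tetranacci (m + 1 + (j + 1)) : ℤ) =
    (tetranacci (m + 3) : ℤ) * tetranacci (j + 2) +
      (tetranacci (m + 2) : ℤ) * ((tetranacci (j + 3) : ℤ) - tetranacci (j + 2)) +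
      (tetranacci (m + 1) : ℤ) * ((tetranacci j : ℤ) + tetranacci (j + 1)) +
      (tetranacci m : ℤ) * tetranacci (j + 1) := by
  induction j using Nat.strong_induction_on with
  | _ j ih =>
    match j with
    | 0 =>
      show (tetranacci (m + 2) : ℤ) = _
      simp [tetranacci]
    | 1 =>
      show (tetranacci (m + 3) : ℤ) = _
      simp [tetranacci]
    | 2 =>
      show (tetranacci (m + 4) : ℤ) = _
      rw [trec m]
      simp [tetranacci]
    | 3 =>
      show (tetranacci (m + 5) : ℤ) = _
      have h2 := trec (m + 1)
      have h1 := trec m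
      rw [show m + 5 = (m + 1) + 4 from by ring, h2]
      simp [tetranacci] at h1 ⊢
      linarith
    | (j + 4) =>
      have nrm : ∀ a b c : ℕ, a + b + c = a + (b + c) := fun a b c => by omega
      have i0 := ih j (by omega)
      have i1 := ih (j + 1) (by omega)
      have i2 := ih (j + 2) (by omega)
      have i3 := ih (j + 3) (by omega)
      have r4 : (tetranacci (j+4):ℤ) = tetranacci (j+3) + tetranacci (j+2) + tetranacci (j+1) + tetranacci j := trec j
      have r5 : (tetranacci (j+5):ℤ) = tetranacci (j+4) + tetranacci (j+3) + tetranacci (j+2) + tetranacci (j+1) := by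
        have h := trec (j+1); simp only [nrm] at h ⊢; norm_num at h ⊢; exact h
      have r6 : (tetranacci (j+6):ℤ) = tetranacci (j+5) + tetranacci (j+4) + tetranacci (j+3) + tetranacci (j+2) := by
        have h := trec (j+2); simp only [nrm] at h ⊢; norm_num at h ⊢; exact h
      have r7 : (tetranacci (j+7):ℤ) = tetranacci (j+6) + tetranacci (j+5) + tetranacci (j+4) + tetranacci (j+3) := by
        have h := trec (j+3); simp only [nrm] at h ⊢; norm_num at h ⊢; exact h
      have L : (tetranacci (m+1+(j+4+1)):ℤ) =
          tetranacci (m+1+(j+3+1)) + tetranacci (m+1+(j+2+1)) + tetranacci (m+1+(j+1+1)) + tetranacci (m+1+(j+1)) := by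
        have h := trec (m+j+2)
        have e : m + 1 + (j + 4 + 1) = m + j + 2 + 4 := by omega
        have e3 : m + j + 2 + 3 = m + 1 + (j + 3 + 1) := by omega
        have e2 : m + j + 2 + 2 = m + 1 + (j + 2 + 1) := by omega
        have e1 : m + j + 2 + 1 = m + 1 + (j + 1 + 1) := by omega
        have e0 : m + j + 2 = m + 1 + (j + 1) := by omega
        rw [e, h, e3, e2, e1]; rw [e0]
      rw [L, i0, i1, i2, i3]
      simp only [nrm] at *
      norm_num at *
      rw [r7, r6, r5, r4]
      ring
theorem tetranacci_add (n k : ℕ) (hn : 1 ≤ n) (hk : 1 ≤ k) :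
    (tetranacci (n + k) : ℤ) =
      (tetranacci (n + 2) : ℤ) * tetranacci (k + 1) +
        (tetranacci (n + 1) : ℤ) * ((tetranacci (k + 2) : ℤ) - tetranacci (k + 1)) +
        (tetranacci n : ℤ) * ((tetranacci (k - 1) : ℤ) + tetranacci k) +
        (tetranacci (n - 1) : ℤ) * tetranacci k := by
  obtain ⟨m, rfl⟩ := Nat.exists_eq_add_of_le' hn
  obtain ⟨j, rfl⟩ := Nat.exists_eq_add_of_le' hk
  rw [show m + 1 + 2 = m + 3 from by ring, show m + 1 + 1 = m + 2 from by ring,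
    show j + 1 + 2 = j + 3 from by ring, show j + 1 + 1 = j + 2 from by ring,
    Nat.add_sub_cancel, Nat.add_sub_cancel]
  exact taux m j
end
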